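/- arXiv:math/0209213 — 3 statements merged into one kernel-verified Lean document; each statement's English description precedes it below -/
import Mathlib

section
/- Let f ∈ h_i and let X be a vector field in P_j, for i, j ∈ ℤ. Then the function x ↦ Df(x)[X(x)] (the derivative of f along X) belongs to h_{i+j}. -/
open scoped BigOperators

noncomputable section

/-- `f : ℝⁿ × ℝⁿ → ℝ` belongs to `h_i`: it is a finite sum
`f(q,v) = Σ_{|α| = i} c_α(q) v^α` over multi-indices `α` of total degree `i`
with smooth coefficients `c_α`. -/
def MemH (n : ℕ) (i : ℤ) (f : (Fin n → ℝ) × (Fin n → ℝ) → ℝ) : Prop :=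
  ∃ (S : Finset (Fin n → ℕ)) (c : (Fin n → ℕ) → (Fin n → ℝ) → ℝ),
    (∀ α ∈ S, ((∑ j, α j : ℕ) : ℤ) = i) ∧
    (∀ α, ContDiff ℝ (⊤ : ℕ∞) (c α)) ∧
    (∀ q v : Fin n → ℝ, f (q, v) = ∑ α ∈ S, c α q * ∏ j, v j ^ α j)

/-- A vector field `X` on `ℝⁿ × ℝⁿ` belongs to `P_i`: its first `n`
components belong to `h_i` and its last `n` components belong to `h_{i+1}`. -/
def MemP (n : ℕ) (i : ℤ)
    (X : (Fin n → ℝ) × (Fin n → ℝ) → (Fin n → ℝ) × (Fin n → ℝ)) : Prop :=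
  (∀ j : Fin n, MemH n i (fun x => (X x).1 j)) ∧
  (∀ j : Fin n, MemH n (i + 1) (fun x => (X x).2 j))

lemma memH_congr {n : ℕ} {k : ℤ} {f g : (Fin n → ℝ) × (Fin n → ℝ) → ℝ}
    (h : ∀ x, f x = g x) (hf : MemH n k f) : MemH n k g := by
  obtain ⟨S, c, h1, h2, h3⟩ := hf
  exact ⟨S, c, h1, h2, fun q v => by rw [← h (q, v)]; exact h3 q v⟩

lemma memH_cast {n : ℕ} {k k' : ℤ} {f : (Fin n → ℝ) × (Fin n → ℝ) → ℝ}
    (h : k = k') (hf : MemH n k f) : MemH n k' f := h ▸ hf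

lemma memH_zero {n : ℕ} {k : ℤ} : MemH n k (fun _ => 0) :=
  ⟨∅, fun _ _ => 0, by simp, fun _ => contDiff_const, by simp⟩

lemma memH_add {n : ℕ} {k : ℤ} {f g : (Fin n → ℝ) × (Fin n → ℝ) → ℝ}
    (hf : MemH n k f) (hg : MemH n k g) : MemH n k (fun x => f x + g x) := by
  classical
  obtain ⟨S₁, c₁, h1, h2, h3⟩ := hf
  obtain ⟨S₂, d₁, g1, g2, g3⟩ := hg
  refine ⟨S₁ ∪ S₂, fun α q => (if α ∈ S₁ then c₁ α q else 0) + (if α ∈ S₂ then d₁ α q else 0),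
    ?_, ?_, ?_⟩
  · intro α hα
    rcases Finset.mem_union.1 hα with h | h
    · exact h1 α h
    · exact g1 α h
  · intro α
    apply ContDiff.add <;> split
    · exact h2 α
    · exact contDiff_const
    · exact g2 α
    · exact contDiff_const
  · intro q v
    show f (q, v) + g (q, v) = _
    rw [h3 q v, g3 q v]
    simp only [add_mul, Finset.sum_add_distrib, ite_mul, zero_mul, Finset.sum_ite_mem,
      Finset.union_inter_cancel_left, Finset.union_inter_cancel_right]

lemma memH_sum {n : ℕ} {k : ℤ} {ι : Type*} (s : Finset ι)
    (F : ι → (Fin n → ℝ) × (Fin n → ℝ) → ℝ)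
    (h : ∀ a ∈ s, MemH n k (F a)) : MemH n k (fun x => ∑ a ∈ s, F a x) := by
  classical
  induction s using Finset.induction_on with
  | empty => exact memH_congr (fun x => by simp) memH_zero
  | @insert a s hnotmem ih =>
    refine memH_congr (fun x => ?_) (memH_add (h a (Finset.mem_insert_self a s))
      (ih fun b hb => h b (Finset.mem_insert_of_mem hb)))
    rw [Finset.sum_insert hnotmem]

lemma memH_smul {n : ℕ} {k : ℤ} {g : (Fin n → ℝ) × (Fin n → ℝ) → ℝ}
    (d : (Fin n → ℝ) → ℝ) (hd : ContDiff ℝ (⊤ : ℕ∞) d)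
    (hg : MemH n k g) : MemH n k (fun x => d x.1 * g x) := by
  obtain ⟨S, c, h1, h2, h3⟩ := hg
  refine ⟨S, fun α q => d q * c α q, h1, fun α => hd.mul (h2 α), fun q v => ?_⟩
  simp only [h3 q v, Finset.mul_sum]
  exact Finset.sum_congr rfl fun α _ => by ring

lemma memH_monomial_mul {n : ℕ} {k : ℤ} {g : (Fin n → ℝ) × (Fin n → ℝ) → ℝ}
    (μ : Fin n → ℕ) (hg : MemH n k g) :
    MemH n (k + (∑ j, μ j : ℕ)) (fun x => (∏ j, x.2 j ^ μ j) * g x) := by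
  classical
  obtain ⟨S, c, h1, h2, h3⟩ := hg
  refine ⟨S.image (· + μ), fun β => c (β - μ), ?_, fun β => h2 _, fun q v => ?_⟩
  · intro β hβ
    obtain ⟨α, hα, rfl⟩ := Finset.mem_image.1 hβ
    have : (∑ j, (α + μ) j : ℕ) = (∑ j, α j) + (∑ j, μ j) := by
      simp [Finset.sum_add_distrib]
    rw [this, Nat.cast_add, h1 α hα]
  · rw [Finset.sum_image (by intro a _ b _ h; exact add_left_injective μ h)]
    simp only [h3 q v, Finset.mul_sum]
    refine Finset.sum_congr rfl fun α _ => ?_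
    have h4 : α + μ - μ = α := by funext j; simp
    have h5 : (∏ j, v j ^ (α + μ) j) = (∏ j, v j ^ α j) * ∏ j, v j ^ μ j := by
      rw [← Finset.prod_mul_distrib]
      exact Finset.prod_congr rfl fun j _ => by simp [pow_add]
    rw [h4, h5]; ring

/-- if `f ∈ h_i` and `X ∈ P_j` then the derivative of `f`
along `X`, i.e. `x ↦ Df(x)[X(x)]`, belongs to `h_{i+j}`. -/
theorem deriv_along_homogeneous (n : ℕ) (i j : ℤ)
    (f : (Fin n → ℝ) × (Fin n → ℝ) → ℝ)
    (X : (Fin n → ℝ) × (Fin n → ℝ) → (Fin n → ℝ) × (Fin n → ℝ))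
    (hf : MemH n i f) (hX : MemP n j X) :
    MemH n (i + j) (fun x => fderiv ℝ f x (X x)) := by
  classical
  obtain ⟨S, c, hdeg, hc, heq⟩ := hf
  obtain ⟨hX1, hX2⟩ := hX
  have hfeq : f = fun x => ∑ α ∈ S, c α x.1 * ∏ m, x.2 m ^ α m := by
    funext x
    rw [← Prod.mk.eta (p := x)]
    exact heq x.1 x.2
  -- derivative of each monomial
  have hfact : ∀ (α : Fin n → ℕ) (x : (Fin n → ℝ) × (Fin n → ℝ)),
      HasFDerivAt (fun y : (Fin n → ℝ) × (Fin n → ℝ) => ∏ m, y.2 m ^ α m)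
        (∑ k, (∏ m ∈ Finset.univ.erase k, x.2 m ^ α m) •
          (((α k : ℝ) * x.2 k ^ (α k - 1)) •
            ((ContinuousLinearMap.proj k).comp
              (ContinuousLinearMap.snd ℝ (Fin n → ℝ) (Fin n → ℝ))))) x := by
    intro α x
    refine HasFDerivAt.finset_prod (fun k _ => ?_)
    have h1 : HasFDerivAt (fun y : (Fin n → ℝ) × (Fin n → ℝ) => y.2 k)
        ((ContinuousLinearMap.proj k).comp
          (ContinuousLinearMap.snd ℝ (Fin n → ℝ) (Fin n → ℝ))) x :=
      ((ContinuousLinearMap.proj k).comp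
        (ContinuousLinearMap.snd ℝ (Fin n → ℝ) (Fin n → ℝ))).hasFDerivAt
    exact (hasDerivAt_pow (α k) (x.2 k)).comp_hasFDerivAt x h1
  have hterm : ∀ (α : Fin n → ℕ) (x : (Fin n → ℝ) × (Fin n → ℝ)),
      HasFDerivAt (fun y : (Fin n → ℝ) × (Fin n → ℝ) => c α y.1 * ∏ m, y.2 m ^ α m)
        (c α x.1 • (∑ k, (∏ m ∈ Finset.univ.erase k, x.2 m ^ α m) •
            (((α k : ℝ) * x.2 k ^ (α k - 1)) •
              ((ContinuousLinearMap.proj k).comp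
                (ContinuousLinearMap.snd ℝ (Fin n → ℝ) (Fin n → ℝ)))))
         + (∏ m, x.2 m ^ α m) • ((fderiv ℝ (c α) x.1).comp
              (ContinuousLinearMap.fst ℝ (Fin n → ℝ) (Fin n → ℝ)))) x := by
    intro α x
    exact HasFDerivAt.mul
      ((((hc α).differentiable (by simp) x.1).hasFDerivAt).comp x hasFDerivAt_fst)
      (hfact α x)
  have hf' : ∀ x, HasFDerivAt f
      (∑ α ∈ S, (c α x.1 • (∑ k, (∏ m ∈ Finset.univ.erase k, x.2 m ^ α m) •
            (((α k : ℝ) * x.2 k ^ (α k - 1)) •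
              ((ContinuousLinearMap.proj k).comp
                (ContinuousLinearMap.snd ℝ (Fin n → ℝ) (Fin n → ℝ)))))
         + (∏ m, x.2 m ^ α m) • ((fderiv ℝ (c α) x.1).comp
              (ContinuousLinearMap.fst ℝ (Fin n → ℝ) (Fin n → ℝ))))) x := by
    intro x
    rw [hfeq]
    exact HasFDerivAt.fun_sum fun α _ => hterm α x
  have hsingle : ∀ (L : (Fin n → ℝ) →L[ℝ] ℝ) (w : Fin n → ℝ),
      L w = ∑ k, L (Pi.single k 1) * w k := by
    intro L w
    have h1 := L.toLinearMap.pi_apply_eq_sum_univ w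
    simp only [ContinuousLinearMap.coe_coe, smul_eq_mul] at h1
    rw [h1]
    refine Finset.sum_congr rfl fun k _ => ?_
    have : (Pi.single k 1 : (Fin n → ℝ)) = fun m => if k = m then (1:ℝ) else 0 := by
      funext m; simp [Pi.single_apply, eq_comm]
    rw [this, mul_comm]
  have hval : ∀ x, fderiv ℝ f x (X x) =
      ∑ α ∈ S,
        (c α x.1 * ∑ k, (∏ m ∈ Finset.univ.erase k, x.2 m ^ α m) *
            (((α k : ℝ) * x.2 k ^ (α k - 1)) * (X x).2 k)
         + (∏ m, x.2 m ^ α m) *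
            ∑ k, fderiv ℝ (c α) x.1 (Pi.single k 1) * (X x).1 k) := by
    intro x
    rw [(hf' x).fderiv]
    simp only [ContinuousLinearMap.sum_apply, ContinuousLinearMap.add_apply,
      ContinuousLinearMap.smul_apply, ContinuousLinearMap.comp_apply,
      ContinuousLinearMap.coe_fst', ContinuousLinearMap.coe_snd',
      ContinuousLinearMap.proj_apply, smul_eq_mul]
    refine Finset.sum_congr rfl fun α _ => ?_
    rw [← hsingle (fderiv ℝ (c α) x.1) ((X x).1)]
  refine memH_congr (fun x => (hval x).symm) ?_
  refine memH_sum S _ fun α hα => memH_add ?_ ?_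
  · -- velocity part
    refine memH_smul (c α) (hc α) ?_
    refine memH_sum Finset.univ _ fun k _ => ?_
    by_cases h0 : α k = 0
    · exact memH_congr (fun x => by simp [h0]) memH_zero
    · set α' := Function.update α k (α k - 1) with hα'
      have hprod : ∀ x : (Fin n → ℝ) × (Fin n → ℝ),
          (∏ m, x.2 m ^ α' m) = x.2 k ^ (α k - 1) * ∏ m ∈ Finset.univ.erase k, x.2 m ^ α m := by
        intro x
        rw [← Finset.mul_prod_erase Finset.univ _ (Finset.mem_univ k)]
        congr 1
        · rw [hα', Function.update_self]
        · exact Finset.prod_congr rfl fun m hm =>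
            by rw [hα', Function.update_of_ne (Finset.ne_of_mem_erase hm)]
      have hdeg' : ((∑ m, α' m : ℕ) : ℤ) = i - 1 := by
        have e1 : (∑ m, α m) = α k + ∑ m ∈ Finset.univ.erase k, α m :=
          (Finset.add_sum_erase Finset.univ α (Finset.mem_univ k)).symm
        have e2 : (∑ m, α' m) = (α k - 1) + ∑ m ∈ Finset.univ.erase k, α m := by
          rw [← Finset.add_sum_erase Finset.univ α' (Finset.mem_univ k)]
          congr 1
          · rw [hα', Function.update_self]
          · exact Finset.sum_congr rfl fun m hm =>
              by rw [hα', Function.update_of_ne (Finset.ne_of_mem_erase hm)]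
        have h1 : 1 ≤ α k := Nat.one_le_iff_ne_zero.2 h0
        have h2 := hdeg α hα
        rw [e1] at h2
        rw [e2]
        push_cast [Nat.cast_sub h1] at h2 ⊢
        linarith
      have hmem := memH_smul (fun _ => (α k : ℝ)) contDiff_const
        (memH_monomial_mul α' (hX2 k))
      refine memH_congr (fun x => ?_) (memH_cast ?_ hmem)
      · rw [hprod x]; ring
      · rw [hdeg']; ring
  · -- position part
    have hmem := memH_monomial_mul α (memH_sum Finset.univ
      (fun k => fun x => fderiv ℝ (c α) x.1 (Pi.single k (1:ℝ)) * (X x).1 k)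
      (fun k _ => memH_congr (fun x => by ring)
        (memH_smul (fun q => fderiv ℝ (c α) q (Pi.single k 1))
          (((hc α).fderiv_right (by simp)).clm_apply contDiff_const) (hX1 k))))
    refine memH_cast ?_ hmem
    rw [hdeg α hα]; ring

end
end

section
/- Let Γ^i_{jk} : ℝ^n → ℝ be smooth Christoffel symbols and Y_a, Y_b : ℝ^n → ℝ^n smooth vector fields. Then the vertical lift of the symmetric product equals the iterated Lie bracket with the geodesic spray: ⟨Y_a : Y_b⟩^lift = [Y_b^lift, [Z, Y_a^lift]] as vector fields on ℝ^n × ℝ^n. -/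
open scoped BigOperators

noncomputable section

/-- Lie bracket of vector fields: `[X, Y](x) = DY(x)[X(x)] − DX(x)[Y(x)]`. -/
def VFBracket {E : Type*} [NormedAddCommGroup E] [NormedSpace ℝ E]
    (X Y : E → E) : E → E :=
  fun x => fderiv ℝ Y x (X x) - fderiv ℝ X x (Y x)

/-- `Γ(q)(v,w)` is the vector with `i`-th component `Γ^i_{jk}(q) v^j w^k`. -/
def christoffelOp (n : ℕ) (Γ : (Fin n → ℝ) → Fin n → Fin n → Fin n → ℝ)
    (q v w : Fin n → ℝ) : Fin n → ℝ :=
  fun i => ∑ j, ∑ k, Γ q i j k * v j * w k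

/-- The geodesic spray `Z(q, v) = (v, −Γ(q)(v, v))`. -/
def geodesicSpray (n : ℕ) (Γ : (Fin n → ℝ) → Fin n → Fin n → Fin n → ℝ) :
    (Fin n → ℝ) × (Fin n → ℝ) → (Fin n → ℝ) × (Fin n → ℝ) :=
  fun x => (x.2, -(christoffelOp n Γ x.1 x.2 x.2))

/-- The vertical lift `Y^lift(q, v) = (0, Y(q))`. -/
def vlift (n : ℕ) (Y : (Fin n → ℝ) → (Fin n → ℝ)) :
    (Fin n → ℝ) × (Fin n → ℝ) → (Fin n → ℝ) × (Fin n → ℝ) :=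
  fun x => (0, Y x.1)

/-- The symmetric product `⟨Y_a : Y_b⟩`, with `i`-th component
`(∂Y_a^i/∂q^j) Y_b^j + (∂Y_b^i/∂q^j) Y_a^j + Γ^i_{jk}(Y_a^j Y_b^k + Y_a^k Y_b^j)`. -/
def symProd (n : ℕ) (Γ : (Fin n → ℝ) → Fin n → Fin n → Fin n → ℝ)
    (Ya Yb : (Fin n → ℝ) → (Fin n → ℝ)) : (Fin n → ℝ) → (Fin n → ℝ) :=
  fun q => fderiv ℝ Ya q (Yb q) + fderiv ℝ Yb q (Ya q)
    + christoffelOp n Γ q (Ya q) (Yb q) + christoffelOp n Γ q (Yb q) (Ya q)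

section helpers

variable {E F : Type*} [NormedAddCommGroup E] [NormedSpace ℝ E]
  [NormedAddCommGroup F] [NormedSpace ℝ F]

lemma lineHasDeriv (v A : E) : HasDerivAt (fun t : ℝ => v + t • A) A 0 := by
  simpa using ((hasDerivAt_id (0 : ℝ)).smul_const A).const_add v

lemma fderiv_eval (f : E → F) (x w : E) (D : F) (hf : DifferentiableAt ℝ f x)
    (h : HasDerivAt (fun t : ℝ => f (x + t • w)) D 0) : fderiv ℝ f x w = D := by
  rw [← hf.lineDeriv_eq_fderiv]
  exact h.deriv

lemma mapLine {f : E → F} {q : E} (hf : DifferentiableAt ℝ f q) (w : E) :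
    HasDerivAt (fun t : ℝ => f (q + t • w)) (fderiv ℝ f q w) 0 := by
  have := hf.hasFDerivAt.comp_hasDerivAt_of_eq 0 (lineHasDeriv q w) (by simp)
  exact this

lemma chrisLine (n : ℕ) (Γ : (Fin n → ℝ) → Fin n → Fin n → Fin n → ℝ)
    (q a b A B : Fin n → ℝ) :
    HasDerivAt (fun t : ℝ => christoffelOp n Γ q (a + t • A) (b + t • B))
      (christoffelOp n Γ q A b + christoffelOp n Γ q a B) 0 := by
  rw [hasDerivAt_pi]
  intro i
  have key : ∀ j k, HasDerivAt
      (fun t : ℝ => Γ q i j k * (a j + t * A j) * (b k + t * B k))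
      (Γ q i j k * A j * b k + Γ q i j k * a j * B k) 0 := by
    intro j k
    have h1 : HasDerivAt (fun t : ℝ => a j + t * A j) (A j) 0 := by
      simpa using (hasDerivAt_mul_const (A j)).const_add (a j)
    have h2 : HasDerivAt (fun t : ℝ => b k + t * B k) (B k) 0 := by
      simpa using (hasDerivAt_mul_const (B k)).const_add (b k)
    have := (h1.const_mul (Γ q i j k)).fun_mul h2
    convert this using 1
    · rfl
    · rfl
    ring
  have hsum := HasDerivAt.fun_sum (u := Finset.univ)
    (fun j _ => HasDerivAt.fun_sum (u := Finset.univ) (fun k _ => key j k))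
  have heq : (fun t : ℝ => christoffelOp n Γ q (a + t • A) (b + t • B) i)
      = fun t : ℝ => ∑ j, ∑ k, Γ q i j k * (a j + t * A j) * (b k + t * B k) := by
    funext t
    simp [christoffelOp]
  rw [heq]
  convert hsum using 1
  simp only [christoffelOp, Pi.add_apply]
  simp [Finset.sum_add_distrib]

lemma chris_contDiff {n : ℕ} {Γ : (Fin n → ℝ) → Fin n → Fin n → Fin n → ℝ}
    (hΓ : ∀ i j k : Fin n, ContDiff ℝ (⊤ : ℕ∞) (fun q => Γ q i j k))
    {f a b : E → Fin n → ℝ} (hf : ContDiff ℝ ((⊤ : ℕ∞) : WithTop ℕ∞) f)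
    (ha : ContDiff ℝ ((⊤ : ℕ∞) : WithTop ℕ∞) a) (hb : ContDiff ℝ ((⊤ : ℕ∞) : WithTop ℕ∞) b) :
    ContDiff ℝ ((⊤ : ℕ∞) : WithTop ℕ∞) (fun x => christoffelOp n Γ (f x) (a x) (b x)) := by
  rw [contDiff_pi]
  intro i
  apply ContDiff.sum
  intro j _
  apply ContDiff.sum
  intro k _
  exact ((((hΓ i j k).of_le (by simp)).comp hf).mul (contDiff_pi.mp ha j)).mul
    (contDiff_pi.mp hb k)

lemma clmLine (L : E →L[ℝ] F) (v B : E) :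
    HasDerivAt (fun t : ℝ => L (v + t • B)) (L B) 0 := by
  exact L.hasFDerivAt.comp_hasDerivAt 0 (lineHasDeriv v B)

end helpers

/-- the vertical lift of the symmetric product equals the
iterated Lie bracket `⟨Y_a : Y_b⟩^lift = [Y_b^lift, [Z, Y_a^lift]]`. -/
theorem symProd_lift_eq_bracket (n : ℕ)
    (Γ : (Fin n → ℝ) → Fin n → Fin n → Fin n → ℝ)
    (hΓ : ∀ i j k : Fin n, ContDiff ℝ (⊤ : ℕ∞) (fun q => Γ q i j k))
    (Ya Yb : (Fin n → ℝ) → (Fin n → ℝ))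
    (hYa : ContDiff ℝ (⊤ : ℕ∞) Ya) (hYb : ContDiff ℝ (⊤ : ℕ∞) Yb) :
    vlift n (symProd n Γ Ya Yb) =
      VFBracket (vlift n Yb) (VFBracket (geodesicSpray n Γ) (vlift n Ya)) := by
  have hYa' : ContDiff ℝ ((⊤ : ℕ∞) : WithTop ℕ∞) Ya := hYa.of_le (by simp)
  have hYb' : ContDiff ℝ ((⊤ : ℕ∞) : WithTop ℕ∞) Yb := hYb.of_le (by simp)
  have hdYa : ContDiff ℝ ((⊤ : ℕ∞) : WithTop ℕ∞) (fderiv ℝ Ya) :=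
    (contDiff_infty_iff_fderiv.mp hYa').2
  -- the lifted vector fields
  have hVa : ContDiff ℝ ((⊤ : ℕ∞) : WithTop ℕ∞) (vlift n Ya) :=
    contDiff_const.prodMk (hYa'.comp contDiff_fst)
  have hVb : ContDiff ℝ ((⊤ : ℕ∞) : WithTop ℕ∞) (vlift n Yb) :=
    contDiff_const.prodMk (hYb'.comp contDiff_fst)
  set W : (Fin n → ℝ) × (Fin n → ℝ) → (Fin n → ℝ) × (Fin n → ℝ) :=
    fun x => (-(Ya x.1), fderiv ℝ Ya x.1 x.2 + christoffelOp n Γ x.1 (Ya x.1) x.2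
      + christoffelOp n Γ x.1 x.2 (Ya x.1)) with hWdef
  have hW : ContDiff ℝ ((⊤ : ℕ∞) : WithTop ℕ∞) W := by
    apply ContDiff.prodMk
    · exact (hYa'.comp contDiff_fst).neg
    · exact (((hdYa.comp contDiff_fst).clm_apply contDiff_snd).add
        (chris_contDiff hΓ contDiff_fst (hYa'.comp contDiff_fst) contDiff_snd)).add
        (chris_contDiff hΓ contDiff_fst contDiff_snd (hYa'.comp contDiff_fst))
  have hWeq : VFBracket (geodesicSpray n Γ) (vlift n Ya) = W := by
    funext x
    obtain ⟨q, v⟩ := x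
    have h1 : fderiv ℝ (vlift n Ya) (q, v) (geodesicSpray n Γ (q, v))
        = (0, fderiv ℝ Ya q v) := by
      apply fderiv_eval _ _ _ _ (hVa.differentiable (by simp)).differentiableAt
      have : HasDerivAt (fun t : ℝ => ((0 : Fin n → ℝ), Ya (q + t • v)))
          ((0 : Fin n → ℝ), fderiv ℝ Ya q v) 0 :=
        (hasDerivAt_const _ _).prodMk (mapLine (hYa.differentiable (by simp)).differentiableAt v)
      convert this using 2 with t
      all_goals rfl
    have h2 : fderiv ℝ (geodesicSpray n Γ) (q, v) (vlift n Ya (q, v))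
        = (Ya q, -(christoffelOp n Γ q (Ya q) v + christoffelOp n Γ q v (Ya q))) := by
      have hZ : ContDiff ℝ ((⊤ : ℕ∞) : WithTop ℕ∞) (geodesicSpray n Γ) :=
        contDiff_snd.prodMk
          ((chris_contDiff hΓ contDiff_fst contDiff_snd contDiff_snd).neg)
      apply fderiv_eval _ _ _ _ (hZ.differentiable (by simp)).differentiableAt
      have : HasDerivAt (fun t : ℝ =>
          (v + t • Ya q, -(christoffelOp n Γ q (v + t • Ya q) (v + t • Ya q))))
          (Ya q, -(christoffelOp n Γ q (Ya q) v + christoffelOp n Γ q v (Ya q))) 0 :=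
        (lineHasDeriv v (Ya q)).prodMk (chrisLine n Γ q v v (Ya q) (Ya q)).neg
      convert this using 2 with t
      iterate 3 rfl
      all_goals simp [vlift, geodesicSpray]
    unfold VFBracket
    rw [h1, h2, hWdef]
    rw [Prod.ext_iff]
    refine ⟨by simp, ?_⟩
    simp only [Prod.snd_sub, sub_neg_eq_add]
    abel
  rw [hWeq]
  funext x
  obtain ⟨q, v⟩ := x
  have h3 : fderiv ℝ W (q, v) (vlift n Yb (q, v))
      = (0, fderiv ℝ Ya q (Yb q) + christoffelOp n Γ q (Ya q) (Yb q)
        + christoffelOp n Γ q (Yb q) (Ya q)) := by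
    apply fderiv_eval _ _ _ _ (hW.differentiable (by simp)).differentiableAt
    have t1 : HasDerivAt (fun t : ℝ => (fderiv ℝ Ya q) (v + t • Yb q))
        (fderiv ℝ Ya q (Yb q)) 0 := clmLine _ v (Yb q)
    have hz1 : christoffelOp n Γ q 0 v = 0 := by
      funext i; simp [christoffelOp]
    have hz2 : christoffelOp n Γ q v 0 = 0 := by
      funext i; simp [christoffelOp]
    have t2 : HasDerivAt (fun t : ℝ => christoffelOp n Γ q (Ya q) (v + t • Yb q))
        (christoffelOp n Γ q (Ya q) (Yb q)) 0 := by
      simpa [hz1] using chrisLine n Γ q (Ya q) v 0 (Yb q)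
    have t3 : HasDerivAt (fun t : ℝ => christoffelOp n Γ q (v + t • Yb q) (Ya q))
        (christoffelOp n Γ q (Yb q) (Ya q)) 0 := by
      simpa [hz2] using chrisLine n Γ q v (Ya q) (Yb q) 0
    have hc : HasDerivAt (fun t : ℝ => (-(Ya q),
        (fderiv ℝ Ya q) (v + t • Yb q) + christoffelOp n Γ q (Ya q) (v + t • Yb q)
          + christoffelOp n Γ q (v + t • Yb q) (Ya q)))
        ((0 : Fin n → ℝ), fderiv ℝ Ya q (Yb q) + christoffelOp n Γ q (Ya q) (Yb q)
          + christoffelOp n Γ q (Yb q) (Ya q)) 0 :=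
      (hasDerivAt_const _ _).prodMk ((t1.add t2).add t3)
    convert hc using 2 with t
    iterate 3 rfl
    all_goals simp [hWdef, vlift]
  have h4 : fderiv ℝ (vlift n Yb) (q, v) (W (q, v))
      = (0, -(fderiv ℝ Yb q (Ya q))) := by
    apply fderiv_eval _ _ _ _ (hVb.differentiable (by simp)).differentiableAt
    have hc : HasDerivAt (fun t : ℝ => ((0 : Fin n → ℝ), Yb (q + t • (-(Ya q)))))
        ((0 : Fin n → ℝ), fderiv ℝ Yb q (-(Ya q))) 0 :=
      (hasDerivAt_const _ _).prodMk
        (mapLine (hYb.differentiable (by simp)).differentiableAt (-(Ya q)))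
    have hval : fderiv ℝ Yb q (-(Ya q)) = -(fderiv ℝ Yb q (Ya q)) := by
      simp
    rw [← hval]
    convert hc using 2 with t
    iterate 3 rfl
    all_goals simp [hWdef, vlift]
  show vlift n (symProd n Γ Ya Yb) (q, v) = _
  unfold VFBracket
  rw [h3, h4]
  rw [Prod.ext_iff]
  refine ⟨by simp [vlift], ?_⟩
  simp only [Prod.snd_sub, sub_neg_eq_add, vlift, symProd]
  abel


end
end

section
/- Let Q ⊆ ℝ^n be open, Γ^i_{jk} : Q → ℝ smooth Christoffel symbols, and Y_1, …, Y_m : Q → ℝ^n smooth vector fields such that Y_1(q), …, Y_m(q) are linearly independent for every q ∈ Q. Let V be a smooth vector field on Q with V(q) ≠ 0 for all q ∈ Q. Call a curve γ : [0, T] → Q a controlled solution if γ is C² and there exist functions u_1, …, u_m : [0, T] → ℝ such that γ̈^i + Γ^i_{jk}(γ) γ̇^j γ̇^k = Σ_{a=1}^m Y_a^i(γ) u_a(t) on [0, T]. Call V decoupling if for every C² time scaling s : [0, T] → [0, 1] every C¹ curve γ : [0, T] → Q satisfying γ̇(t) = ṡ(t) V(γ(t)) is a controlled solution. Then V is decoupling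 if and only if for every q ∈ Q both V(q) and (∇_V V)(q) lie in span{Y_1(q), …, Y_m(q)}. -/
open scoped BigOperators

noncomputable section

/-- The covariant derivative `∇_X Y`, with `i`-th component
`(∂Y^i/∂q^j) X^j + Γ^i_{jk} X^j Y^k`. -/
def covDeriv (n : ℕ) (Γ : (Fin n → ℝ) → Fin n → Fin n → Fin n → ℝ)
    (X Y : (Fin n → ℝ) → (Fin n → ℝ)) : (Fin n → ℝ) → (Fin n → ℝ) :=
  fun q => fderiv ℝ Y q (X q) + christoffelOp n Γ q (X q) (Y q)

/-- `γ : [0,T] → Q` is a controlled solution of the mechanical system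
`γ̈ + Γ(γ)(γ̇, γ̇) = Σ_a Y_a(γ) u_a(t)`: it is C² and there exist controls
`u_1, …, u_m` for which the equation holds on `[0, T]`. -/
def IsControlledSolution (n m : ℕ) (Q : Set (Fin n → ℝ))
    (Γ : (Fin n → ℝ) → Fin n → Fin n → Fin n → ℝ)
    (Y : Fin m → (Fin n → ℝ) → (Fin n → ℝ))
    (T : ℝ) (γ : ℝ → (Fin n → ℝ)) : Prop :=
  ContDiffOn ℝ 2 γ (Set.Icc 0 T) ∧ (∀ t ∈ Set.Icc (0:ℝ) T, γ t ∈ Q) ∧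
  ∃ u : Fin m → ℝ → ℝ, ∀ t ∈ Set.Icc (0:ℝ) T,
    derivWithin (derivWithin γ (Set.Icc 0 T)) (Set.Icc 0 T) t
      + christoffelOp n Γ (γ t) (derivWithin γ (Set.Icc 0 T) t)
          (derivWithin γ (Set.Icc 0 T) t)
      = ∑ a, u a t • Y a (γ t)

/-- `V` is a decoupling vector field: every curve `γ` in `Q` satisfying
`γ̇(t) = ṡ(t) V(γ(t))` for some C² time scaling `s : [0,T] → [0,1]` is a
controlled solution (a kinematic motion). -/
def IsDecoupling (n m : ℕ) (Q : Set (Fin n → ℝ))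
    (Γ : (Fin n → ℝ) → Fin n → Fin n → Fin n → ℝ)
    (Y : Fin m → (Fin n → ℝ) → (Fin n → ℝ))
    (V : (Fin n → ℝ) → (Fin n → ℝ)) : Prop :=
  ∀ T : ℝ, 0 < T → ∀ s : ℝ → ℝ,
    ContDiffOn ℝ 2 s (Set.Icc 0 T) →
    (∀ t ∈ Set.Icc (0:ℝ) T, s t ∈ Set.Icc (0:ℝ) 1) →
    ∀ γ : ℝ → (Fin n → ℝ),
      ContDiffOn ℝ 1 γ (Set.Icc 0 T) →
      (∀ t ∈ Set.Icc (0:ℝ) T, γ t ∈ Q) →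
      (∀ t ∈ Set.Icc (0:ℝ) T,
        derivWithin γ (Set.Icc 0 T) t
          = derivWithin s (Set.Icc 0 T) t • V (γ t)) →
      IsControlledSolution n m Q Γ Y T γ

lemma christoffelOp_smul_smul (n : ℕ) (Γ : (Fin n → ℝ) → Fin n → Fin n → Fin n → ℝ)
    (q v w : Fin n → ℝ) (a b : ℝ) :
    christoffelOp n Γ q (a • v) (b • w) = (a * b) • christoffelOp n Γ q v w := by
  funext i
  simp only [christoffelOp, Pi.smul_apply, smul_eq_mul, Finset.mul_sum]
  exact Finset.sum_congr rfl fun j _ => Finset.sum_congr rfl fun k _ => by ring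

/-- Second-derivative computation for curves satisfying `γ̇ = ṡ V(γ)`. -/
lemma ode_second_deriv (n : ℕ) (Q : Set (Fin n → ℝ)) (hQ : IsOpen Q)
    (Γ : (Fin n → ℝ) → Fin n → Fin n → Fin n → ℝ)
    (V : (Fin n → ℝ) → (Fin n → ℝ)) (hV : ContDiffOn ℝ (⊤ : ℕ∞) V Q)
    (T : ℝ) (hT : 0 < T) (s : ℝ → ℝ) (hs : ContDiffOn ℝ 2 s (Set.Icc 0 T))
    (γ : ℝ → (Fin n → ℝ)) (hγ : ContDiffOn ℝ 1 γ (Set.Icc 0 T))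
    (hγQ : ∀ t ∈ Set.Icc (0:ℝ) T, γ t ∈ Q)
    (hode : ∀ t ∈ Set.Icc (0:ℝ) T,
      derivWithin γ (Set.Icc 0 T) t = derivWithin s (Set.Icc 0 T) t • V (γ t)) :
    ContDiffOn ℝ 2 γ (Set.Icc 0 T) ∧
    ∀ t ∈ Set.Icc (0:ℝ) T,
      derivWithin (derivWithin γ (Set.Icc 0 T)) (Set.Icc 0 T) t
        + christoffelOp n Γ (γ t) (derivWithin γ (Set.Icc 0 T) t)
            (derivWithin γ (Set.Icc 0 T) t)
      = derivWithin (derivWithin s (Set.Icc 0 T)) (Set.Icc 0 T) t • V (γ t)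
        + (derivWithin s (Set.Icc 0 T) t * derivWithin s (Set.Icc 0 T) t) •
            covDeriv n Γ V V (γ t) := by
  set I := Set.Icc (0:ℝ) T with hIdef
  have hUD : UniqueDiffOn ℝ I := uniqueDiffOn_Icc hT
  have hs2 : ContDiffOn ℝ ((1:WithTop ℕ∞) + 1) s I := by
    have h12 : ((1:WithTop ℕ∞) + 1) = 2 := by norm_num
    rw [h12]; exact hs
  have hs' : ContDiffOn ℝ 1 (derivWithin s I) I :=
    ((contDiffOn_succ_iff_derivWithin hUD).mp hs2).2.2
  have hVγ : ContDiffOn ℝ 1 (fun t => V (γ t)) I :=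
    (hV.of_le (by simp)).comp hγ (fun t ht => hγQ t ht)
  have hg : ContDiffOn ℝ 1 (fun t => derivWithin s I t • V (γ t)) I := hs'.smul hVγ
  have hγd : ContDiffOn ℝ 1 (derivWithin γ I) I := hg.congr hode
  have hγ2 : ContDiffOn ℝ 2 γ I := by
    have h12 : (2 : WithTop ℕ∞) = 1 + 1 := by norm_num
    rw [h12, contDiffOn_succ_iff_derivWithin hUD]
    refine ⟨hγ.differentiableOn one_ne_zero, ?_, hγd⟩
    intro h; simp at h
  refine ⟨hγ2, ?_⟩
  intro t ht
  have hγQ' := hγQ t ht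
  have hVdiff : DifferentiableAt ℝ V (γ t) :=
    (hV.contDiffAt (hQ.mem_nhds hγQ')).differentiableAt (by simp)
  have hγ' : HasDerivWithinAt γ (derivWithin γ I t) I t :=
    (hγ.differentiableOn one_ne_zero t ht).hasDerivWithinAt
  have hVγ' : HasDerivWithinAt (fun u => V (γ u))
      (fderiv ℝ V (γ t) (derivWithin γ I t)) I t :=
    hVdiff.hasFDerivAt.comp_hasDerivWithinAt t hγ'
  have hsd : HasDerivWithinAt (derivWithin s I)
      (derivWithin (derivWithin s I) I t) I t :=
    (hs'.differentiableOn one_ne_zero t ht).hasDerivWithinAt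
  have hg' : HasDerivWithinAt (fun u => derivWithin s I u • V (γ u))
      (derivWithin s I t • fderiv ℝ V (γ t) (derivWithin γ I t)
        + derivWithin (derivWithin s I) I t • V (γ t)) I t := hsd.smul hVγ'
  have key : derivWithin (derivWithin γ I) I t
      = derivWithin s I t • fderiv ℝ V (γ t) (derivWithin γ I t)
        + derivWithin (derivWithin s I) I t • V (γ t) := by
    rw [derivWithin_congr (fun x hx => hode x hx) (hode t ht)]
    exact hg'.derivWithin (hUD t ht)
  rw [key, hode t ht, christoffelOp_smul_smul, ContinuousLinearMap.map_smul]
  simp only [covDeriv, smul_add, smul_smul]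
  abel

/-- `V` is decoupling if and only if both `V(q)` and
`(∇_V V)(q)` lie in `span{Y_1(q), …, Y_m(q)}` at every `q ∈ Q`. -/
theorem decoupling_iff_span (n m : ℕ) (Q : Set (Fin n → ℝ)) (hQ : IsOpen Q)
    (Γ : (Fin n → ℝ) → Fin n → Fin n → Fin n → ℝ)
    (hΓ : ∀ i j k : Fin n, ContDiffOn ℝ (⊤ : ℕ∞) (fun q => Γ q i j k) Q)
    (Y : Fin m → (Fin n → ℝ) → (Fin n → ℝ))
    (hY : ∀ a, ContDiffOn ℝ (⊤ : ℕ∞) (Y a) Q)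
    (hYindep : ∀ q ∈ Q, LinearIndependent ℝ (fun a : Fin m => Y a q))
    (V : (Fin n → ℝ) → (Fin n → ℝ)) (hV : ContDiffOn ℝ (⊤ : ℕ∞) V Q)
    (hVne : ∀ q ∈ Q, V q ≠ 0) :
    IsDecoupling n m Q Γ Y V ↔
      ∀ q ∈ Q,
        V q ∈ Submodule.span ℝ (Set.range fun a : Fin m => Y a q) ∧
        covDeriv n Γ V V q ∈
          Submodule.span ℝ (Set.range fun a : Fin m => Y a q) := by
  classical
  constructor
  · intro hdec q hq
    have hVq : ContDiffAt ℝ 1 V q := (hV.contDiffAt (hQ.mem_nhds hq)).of_le (by simp)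
    obtain ⟨φ, hφ0, ε, hε, hφ⟩ := hVq.exists_forall_mem_closedBall_exists_eq_forall_mem_Ioo_hasDerivAt₀ 0
    have hφc0 : ContinuousAt φ 0 := (hφ 0 (by constructor <;> linarith)).continuousAt
    have hQn : Q ∈ nhds (φ 0) := by rw [hφ0]; exact hQ.mem_nhds hq
    obtain ⟨δ, hδ, hδQ⟩ := Metric.eventually_nhds_iff.mp (hφc0.eventually_mem hQn)
    set T : ℝ := min (min (ε / 2) (δ / 2)) 1 with hTdef
    have hT : 0 < T := lt_min (lt_min (by linarith) (by linarith)) one_pos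
    have hT1 : T ≤ 1 := min_le_right _ _
    have hTε : T < ε := lt_of_le_of_lt ((min_le_left _ _).trans (min_le_left _ _)) (by linarith)
    have hTδ : T < δ := lt_of_le_of_lt ((min_le_left _ _).trans (min_le_right _ _)) (by linarith)
    set I := Set.Icc (0 : ℝ) T with hIdef
    have hUD : UniqueDiffOn ℝ I := uniqueDiffOn_Icc hT
    have h0 : (0 : ℝ) ∈ I := Set.mem_Icc.mpr ⟨le_refl 0, le_of_lt hT⟩
    have hder : ∀ t ∈ I, HasDerivWithinAt φ (V (φ t)) I t := by
      intro t ht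
      have ht' : t ∈ Set.Ioo (0 - ε) (0 + ε) := by
        constructor
        · have := ht.1; linarith
        · have := ht.2; linarith
      exact (hφ t ht').hasDerivWithinAt
    have hφQ : ∀ t ∈ I, φ t ∈ Q := by
      intro t ht
      apply hδQ
      rw [Real.dist_eq, sub_zero, abs_of_nonneg ht.1]
      exact lt_of_le_of_lt ht.2 hTδ
    have hdW : ∀ t ∈ I, derivWithin φ I t = V (φ t) :=
      fun t ht => (hder t ht).derivWithin (hUD t ht)
    have hφcont : ContinuousOn φ I := fun t ht => (hder t ht).continuousWithinAt
    have hφC1 : ContDiffOn ℝ 1 φ I := by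
      have h01 : (1 : WithTop ℕ∞) = 0 + 1 := by norm_num
      rw [h01, contDiffOn_succ_iff_derivWithin hUD]
      refine ⟨fun t ht => (hder t ht).differentiableWithinAt, ?_, ?_⟩
      · intro h; simp at h
      · rw [contDiffOn_zero]
        exact ContinuousOn.congr ((hV.continuousOn).comp hφcont hφQ) hdW
    -- Case (a) : s = id, gives covariant derivative membership
    have hodeA : ∀ t ∈ I, derivWithin φ I t = derivWithin _root_.id I t • V (φ t) := by
      intro t ht
      rw [derivWithin_id _ _ (hUD t ht), one_smul]
      exact hdW t ht
    have hid01 : ∀ t ∈ I, _root_.id t ∈ Set.Icc (0 : ℝ) 1 :=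
      fun t ht => ⟨ht.1, le_trans ht.2 hT1⟩
    obtain ⟨-, -, u, hu⟩ :=
      hdec T hT _root_.id contDiff_id.contDiffOn hid01 φ hφC1 hφQ hodeA
    obtain ⟨-, heqA⟩ :=
      ode_second_deriv n Q hQ Γ V hV T hT _root_.id contDiff_id.contDiffOn φ hφC1 hφQ hodeA
    have e1 := (heqA 0 h0).symm.trans (hu 0 h0)
    have hddA : derivWithin (derivWithin _root_.id I) I 0 = 0 := by
      rw [derivWithin_congr (fun x hx => derivWithin_id _ _ (hUD x hx)) (derivWithin_id _ _ (hUD 0 h0))]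
      exact congrFun (derivWithin_const _ _) _
    rw [hddA, derivWithin_id _ _ (hUD 0 h0), hφ0] at e1
    simp only [zero_smul, zero_add, one_mul, one_smul] at e1
    have hcov : covDeriv n Γ V V q ∈ Submodule.span ℝ (Set.range fun a : Fin m => Y a q) :=
      (Submodule.mem_span_range_iff_exists_fun ℝ).mpr ⟨fun a => u a 0, e1.symm⟩
    -- Case (b) : s t = t^2/2, gives V q membership
    set sq : ℝ → ℝ := fun t => t ^ 2 / 2 with hsqdef
    have hsqC : ContDiff ℝ 2 sq := (contDiff_id.pow 2).div_const 2
    have hsq01 : ∀ t ∈ I, sq t ∈ Set.Icc (0 : ℝ) 1 := by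
      intro t ht
      have h1 := ht.1; have h2 := ht.2
      constructor
      · positivity
      · simp only [hsqdef]; nlinarith
    have hsqmaps : Set.MapsTo sq I I := by
      intro t ht
      have h1 := ht.1; have h2 := ht.2
      constructor
      · positivity
      · simp only [hsqdef]; nlinarith
    have hsqd : ∀ t : ℝ, HasDerivAt sq t t := by
      intro t
      have h := (hasDerivAt_pow 2 t).div_const 2
      refine h.congr_deriv ?_
      norm_num
    have hsqdW : ∀ t ∈ I, derivWithin sq I t = t :=
      fun t ht => ((hsqd t).hasDerivWithinAt).derivWithin (hUD t ht)
    have hodeB : ∀ t ∈ I, derivWithin (φ ∘ sq) I t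
        = derivWithin sq I t • V ((φ ∘ sq) t) := by
      intro t ht
      have h1 : HasDerivWithinAt φ (V (φ (sq t))) I (sq t) := hder (sq t) (hsqmaps ht)
      have h2 : HasDerivWithinAt sq t I t := (hsqd t).hasDerivWithinAt
      have h3 := HasDerivWithinAt.scomp t h1 h2 hsqmaps
      rw [h3.derivWithin (hUD t ht), hsqdW t ht]
      rfl
    have hγB : ContDiffOn ℝ 1 (φ ∘ sq) I :=
      hφC1.comp ((hsqC.contDiffOn).of_le (by norm_num)) hsqmaps
    have hγBQ : ∀ t ∈ I, (φ ∘ sq) t ∈ Q := fun t ht => hφQ (sq t) (hsqmaps ht)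
    obtain ⟨-, -, w, hw⟩ := hdec T hT sq hsqC.contDiffOn hsq01 (φ ∘ sq) hγB hγBQ hodeB
    obtain ⟨-, heqB⟩ :=
      ode_second_deriv n Q hQ Γ V hV T hT sq hsqC.contDiffOn (φ ∘ sq) hγB hγBQ hodeB
    have e2 := (heqB 0 h0).symm.trans (hw 0 h0)
    have hγB0 : (φ ∘ sq) 0 = q := by
      have : sq 0 = 0 := by simp [hsqdef]
      simp [Function.comp, this, hφ0]
    have hddB : derivWithin (derivWithin sq I) I 0 = 1 := by
      rw [derivWithin_congr (fun x hx => hsqdW x hx) (hsqdW 0 h0)]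
      exact (hasDerivWithinAt_id 0 I).derivWithin (hUD 0 h0)
    rw [hddB, hsqdW 0 h0, hγB0] at e2
    simp only [one_smul, zero_mul, mul_zero, zero_smul, add_zero] at e2
    exact ⟨(Submodule.mem_span_range_iff_exists_fun ℝ).mpr ⟨fun a => w a 0, e2.symm⟩, hcov⟩
  · intro hspan T hT s hs hs01 γ hγ hγQ hode
    obtain ⟨hγ2, heq⟩ := ode_second_deriv n Q hQ Γ V hV T hT s hs γ hγ hγQ hode
    refine ⟨hγ2, hγQ, ?_⟩
    choose c hc using fun t (ht : t ∈ Set.Icc (0:ℝ) T) =>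
      (Submodule.mem_span_range_iff_exists_fun ℝ).mp (hspan (γ t) (hγQ t ht)).1
    choose d hd using fun t (ht : t ∈ Set.Icc (0:ℝ) T) =>
      (Submodule.mem_span_range_iff_exists_fun ℝ).mp (hspan (γ t) (hγQ t ht)).2
    refine ⟨fun a t => if ht : t ∈ Set.Icc (0:ℝ) T then
        derivWithin (derivWithin s (Set.Icc 0 T)) (Set.Icc 0 T) t * c t ht a
          + (derivWithin s (Set.Icc 0 T) t * derivWithin s (Set.Icc 0 T) t) * d t ht a
      else 0, ?_⟩
    intro t ht
    rw [heq t ht]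
    simp only [dif_pos ht]
    rw [← hc t ht, ← hd t ht, Finset.smul_sum, Finset.smul_sum,
      ← Finset.sum_add_distrib]
    exact Finset.sum_congr rfl fun a _ => by rw [add_smul, smul_smul, smul_smul]

end
end
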